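/- arXiv:2112.07439 — 2 statements merged into one kernel-verified Lean document; each statement's English description precedes it below -/
import Mathlib

section
/- Let G be a connected finite simple graph, let L be a list-assignment for G, and fix a vertex v ∈ V(G) with |L(v)| > deg_G(v). Let G' := G − v and let L' denote the restriction of L to V(G'). If G' is L'-swappable, then G is L-swappable. -/
open SimpleGraph
open scoped Classical

/-- `φ` is a proper coloring of `G` choosing colors from the lists `L`. -/
def IsLColoring {V : Type*} (G : SimpleGraph V) (L : V → Finset ℕ) (φ : V → ℕ) : Prop :=
  (∀ v, φ v ∈ L v) ∧ ∀ ⦃u w : V⦄, G.Adj u w → φ u ≠ φ w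

/-- The subgraph of `G` induced by the vertices colored `α` or `β` under `φ`. -/
def kempeGraph {V : Type*} (G : SimpleGraph V) (φ : V → ℕ) (α β : ℕ) : SimpleGraph V where
  Adj u w := G.Adj u w ∧ (φ u = α ∨ φ u = β) ∧ (φ w = α ∨ φ w = β)
  symm := ⟨fun u w h => ⟨h.1.symm, h.2.2, h.2.1⟩⟩
  loopless := ⟨fun u h => G.loopless.irrefl u h.1⟩

/-- The coloring obtained from `φ` by interchanging colors `α` and `β` on the
connected component, containing `x`, of the subgraph induced by the vertices
colored `α` or `β`. -/
noncomputable def kempeSwap {V : Type*} (G : SimpleGraph V) (φ : V → ℕ) (α β : ℕ)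
    (x : V) : V → ℕ :=
  fun v =>
    if (kempeGraph G φ α β).Reachable x v ∧ φ v = α then β
    else if (kempeGraph G φ α β).Reachable x v ∧ φ v = β then α
    else φ v

/-- `ψ` is obtained from the `L`-coloring `φ` by a single `L`-valid Kempe swap. -/
def KempeStep {V : Type*} (G : SimpleGraph V) (L : V → Finset ℕ) (φ ψ : V → ℕ) : Prop :=
  IsLColoring G L φ ∧ IsLColoring G L ψ ∧ ∃ α β x, ψ = kempeSwap G φ α β x

/-- Two colorings are `L`-equivalent if one can be obtained from the other by a
sequence of `L`-valid Kempe swaps. -/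
def LEquiv {V : Type*} (G : SimpleGraph V) (L : V → Finset ℕ) :
    (V → ℕ) → (V → ℕ) → Prop :=
  Relation.ReflTransGen (KempeStep G L)

/-- `G` has an `L`-coloring and all of its `L`-colorings are pairwise `L`-equivalent. -/
def LSwappable {V : Type*} (G : SimpleGraph V) (L : V → Finset ℕ) : Prop :=
  (∃ φ, IsLColoring G L φ) ∧
    ∀ φ ψ, IsLColoring G L φ → IsLColoring G L ψ → LEquiv G L φ ψ

/-- The degree of the vertex `v` in `G`. -/
noncomputable def gdeg {V : Type*} (G : SimpleGraph V) (v : V) : ℕ :=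
  (G.neighborSet v).ncard

/-- `G` is `L`-swappable for every degree-assignment `L`. -/
def DegreeSwappable {V : Type*} (G : SimpleGraph V) : Prop :=
  ∀ L : V → Finset ℕ, (∀ v, (L v).card = gdeg G v) → LSwappable G L

/-- `G` has an `L`-coloring for every degree-assignment `L`. -/
def DegreeChoosable {V : Type*} (G : SimpleGraph V) : Prop :=
  ∀ L : V → Finset ℕ, (∀ v, (L v).card = gdeg G v) → ∃ φ, IsLColoring G L φ

/-- `G` is `L`-swappable for every `k`-assignment `L`. -/
def KSwappable {V : Type*} (G : SimpleGraph V) (k : ℕ) : Prop :=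
  ∀ L : V → Finset ℕ, (∀ v, (L v).card = k) → LSwappable G L

/-- `G` is `L`-swappable for every `f`-assignment `L`. -/
def FSwappable {V : Type*} (G : SimpleGraph V) (f : V → ℕ) : Prop :=
  ∀ L : V → Finset ℕ, (∀ v, (L v).card = f v) → LSwappable G L

/-!
Every Kempe swap of `G - v` lifts to a short sequence of `L`-valid Kempe swaps of `G` with the
same effect off `v`. If `v` lies outside the swapped `α,β`-component, the same swap in `G` works.
If it lies inside and `v` has a free color outside `{α, β}`, recolor `v` first. Otherwise, say
`φ(v) = α`, the bound `|L(v)| > deg(v)` forces the neighbours of `v` to carry pairwise distinct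
colors and `β ∈ L(v)`; then `v` is a leaf of its Kempe component, so the swap in `G` still
restricts to the one in `G - v` and gives `v` the valid color `β`. Once the colorings agree off
`v`, a last swap recolors `v` alone.
-/

open Function

section

variable {V : Type*} {G : SimpleGraph V} {L : V → Finset ℕ} {φ ψ : V → ℕ} {α β : ℕ} {v x u : V}

lemma Finset.eq_insert_image_and_injOn_of_card_lt {ι κ : Type*} [DecidableEq κ] {s : Finset ι}
    {f : ι → κ} {A : Finset κ} {a : κ} (ha : a ∉ s.image f) (hA : A ⊆ insert a (s.image f))
    (hcard : s.card < A.card) : A = insert a (s.image f) ∧ Set.InjOn f s := by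
  have h₁ := Finset.card_insert_of_notMem ha
  have h₂ := Finset.card_image_le (s := s) (f := f)
  have h₃ := Finset.card_le_card hA
  exact ⟨Finset.eq_of_subset_of_card_le hA (by omega), Finset.injOn_of_card_image_eq (by omega)⟩

lemma SimpleGraph.reachable_induce_compl_singleton_iff {H : SimpleGraph V} (hx : x ≠ v)
    (hu : u ≠ v) (hv : ¬ H.Reachable x v ∨ (H.neighborSet v).Subsingleton) :
    (H.induce {v}ᶜ).Reachable ⟨x, hx⟩ ⟨u, hu⟩ ↔ H.Reachable x u := by
  refine ⟨fun h => h.map (Embedding.induce _).toHom, fun h => ?_⟩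
  obtain ⟨p, hp⟩ := h.exists_isPath
  have hvp : v ∉ p.support := by
    rcases hv with hv | hv
    · exact fun hvp => hv ⟨p.takeUntil v hvp⟩
    · exact hp.isTrail.not_mem_support_of_subsingleton_neighborSet hx.symm hu.symm hv
  exact ⟨p.induce _ fun y hy => ne_of_mem_of_not_mem hy hvp⟩

lemma gdeg_eq_card_neighborFinset [Fintype V] (G : SimpleGraph V) (v : V) :
    gdeg G v = (G.neighborFinset v).card :=
  Set.ncard_eq_toFinset_card' _

section KempeSwap

lemma kempeGraph_comm (G : SimpleGraph V) (φ : V → ℕ) (α β : ℕ) :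
    kempeGraph G φ α β = kempeGraph G φ β α := by
  ext u w
  simp only [kempeGraph]
  tauto

lemma kempeSwap_comm (G : SimpleGraph V) (φ : V → ℕ) (α β : ℕ) (x : V) :
    kempeSwap G φ α β x = kempeSwap G φ β α x := by
  funext u
  simp only [kempeSwap, kempeGraph_comm G φ α β]
  split_ifs <;> grind

lemma eq_or_eq_of_mem_support_kempeGraph (h : u ∈ (kempeGraph G φ α β).support) :
    φ u = α ∨ φ u = β := by
  obtain ⟨w, hw⟩ := h
  exact hw.2.1

lemma kempeSwap_apply_of_not_reachable (h : ¬ (kempeGraph G φ α β).Reachable x u) :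
    kempeSwap G φ α β x u = φ u := by
  simp [kempeSwap, h]

lemma kempeSwap_apply_of_ne (hα : φ u ≠ α) (hβ : φ u ≠ β) : kempeSwap G φ α β x u = φ u := by
  simp [kempeSwap, hα, hβ]

lemma kempeSwap_apply_left (h : (kempeGraph G φ α β).Reachable x u) (hu : φ u = α) :
    kempeSwap G φ α β x u = β := by
  simp [kempeSwap, h, hu]

lemma kempeSwap_apply_right (h : (kempeGraph G φ α β).Reachable x u) (hu : φ u = β) :
    kempeSwap G φ α β x u = α := by
  simp only [kempeSwap, h, hu, true_and]
  split_ifs <;> simp_all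

lemma kempeSwap_apply_of_ne_self (h : kempeSwap G φ α β x u ≠ φ u) :
    (kempeGraph G φ α β).Reachable x u ∧ (φ u = α ∨ φ u = β) ∧
      (kempeSwap G φ α β x u = α ∨ kempeSwap G φ α β x u = β) := by
  simp only [kempeSwap] at h ⊢
  split_ifs at h ⊢ <;> tauto

lemma kempeSwap_induce_compl_singleton (x : ({v}ᶜ : Set V))
    (hv : ¬ (kempeGraph G φ α β).Reachable x v ∨
      ((kempeGraph G φ α β).neighborSet v).Subsingleton) :
    (fun u : ({v}ᶜ : Set V) => kempeSwap G φ α β x u) =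
      kempeSwap (G.induce {v}ᶜ) (fun y => φ y) α β x := by
  funext u
  have hreach : (kempeGraph (G.induce {v}ᶜ) (fun y => φ y) α β).Reachable x u ↔
      (kempeGraph G φ α β).Reachable x u :=
    reachable_induce_compl_singleton_iff x.2 u.2 hv
  simp only [kempeSwap, hreach]

end KempeSwap

section Colorings

lemma IsLColoring.induce (h : IsLColoring G L φ) (s : Set V) :
    IsLColoring (G.induce s) (fun y => L y) (fun y => φ y) :=
  ⟨fun u => h.1 u, fun _ _ huw => h.2 huw⟩

lemma IsLColoring.of_induce_compl_singleton
    (h : IsLColoring (G.induce {v}ᶜ) (fun y => L y) (fun y => ψ y)) (hv : ψ v ∈ L v)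
    (hadj : ∀ w, G.Adj v w → ψ w ≠ ψ v) : IsLColoring G L ψ := by
  refine ⟨fun u => ?_, fun a b hab => ?_⟩
  · by_cases hu : u = v
    · exact hu ▸ hv
    · exact h.1 ⟨u, hu⟩
  by_cases ha : a = v
  · subst ha
    exact (hadj b hab).symm
  by_cases hb : b = v
  · subst hb
    exact hadj a hab.symm
  exact h.2 (u := ⟨a, ha⟩) (w := ⟨b, hb⟩) hab

lemma LEquiv.isLColoring (h : LEquiv G L φ ψ) (hφ : IsLColoring G L φ) : IsLColoring G L ψ := by
  rcases h.cases_tail with rfl | ⟨_, -, hstep⟩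
  exacts [hφ, hstep.2.1]

lemma exists_mem_forall_adj_ne [Fintype V] (φ : V → ℕ) (hv : gdeg G v < (L v).card) :
    ∃ c ∈ L v, ∀ w, G.Adj v w → φ w ≠ c := by
  have hcard : ((G.neighborFinset v).image φ).card < (L v).card :=
    Finset.card_image_le.trans_lt (gdeg_eq_card_neighborFinset G v ▸ hv)
  obtain ⟨c, hc, hcN⟩ := Finset.exists_mem_notMem_of_card_lt_card hcard
  exact ⟨c, hc, fun w hw hwc => hcN (hwc ▸ Finset.mem_image_of_mem φ (by simpa using hw))⟩

lemma exists_isLColoring_of_induce_compl_singleton [Fintype V] (hv : gdeg G v < (L v).card)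
    {φ₀ : ({v}ᶜ : Set V) → ℕ} (h₀ : IsLColoring (G.induce {v}ᶜ) (fun y => L y) φ₀) :
    ∃ φ, IsLColoring G L φ := by
  let φ : V → ℕ := fun u => if hu : u = v then 0 else φ₀ ⟨u, hu⟩
  obtain ⟨c, hc, hcN⟩ := exists_mem_forall_adj_ne φ hv
  have hres : (fun y : ({v}ᶜ : Set V) => update φ v c y) = φ₀ :=
    funext fun y => (update_of_ne y.2 _ _).trans (dif_neg y.2)
  refine ⟨update φ v c, .of_induce_compl_singleton (hres ▸ h₀) (by simpa) fun w hw => ?_⟩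
  simpa [update_of_ne hw.ne.symm] using hcN w hw

/-- The swap of the colors `φ v`, `ψ v` at `v`, which is isolated in their Kempe graph. -/
lemma kempeStep_of_eqOn_compl_singleton (hφ : IsLColoring G L φ) (hψ : IsLColoring G L ψ)
    (h : ∀ u ≠ v, φ u = ψ u) : KempeStep G L φ ψ := by
  have hiso : v ∉ (kempeGraph G φ (φ v) (ψ v)).support := by
    rintro ⟨w, hvw, -, hw | hw⟩
    · exact hφ.2 hvw hw.symm
    · exact hψ.2 hvw (h w hvw.ne.symm ▸ hw).symm
  refine ⟨hφ, hψ, φ v, ψ v, v, funext fun u => ?_⟩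
  by_cases hu : u = v
  · subst hu
    exact (kempeSwap_apply_left (Reachable.refl _) rfl).symm
  · rw [kempeSwap_apply_of_not_reachable fun hr => hiso (mem_support_of_reachable (Ne.symm hu) hr),
      h u hu]

end Colorings

section Lifting

lemma kempeStep_of_not_reachable {x : ({v}ᶜ : Set V)} (hφ : IsLColoring G L φ)
    (hnr : ¬ (kempeGraph G φ α β).Reachable x v)
    (hσ : IsLColoring (G.induce {v}ᶜ) (fun y => L y)
      (kempeSwap (G.induce {v}ᶜ) (fun y => φ y) α β x)) :
    KempeStep G L φ (kempeSwap G φ α β x) ∧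
      (fun u : ({v}ᶜ : Set V) => kempeSwap G φ α β x u) =
        kempeSwap (G.induce {v}ᶜ) (fun y => φ y) α β x := by
  have hres := kempeSwap_induce_compl_singleton x (.inl hnr)
  have hv : kempeSwap G φ α β x v = φ v := kempeSwap_apply_of_not_reachable hnr
  refine ⟨⟨hφ, .of_induce_compl_singleton (hres ▸ hσ) (hv ▸ hφ.1 v) fun w hw => ?_, α, β, x, rfl⟩,
    hres⟩
  rw [hv]
  by_cases hw' : kempeSwap G φ α β x w = φ w
  · exact hw' ▸ (hφ.2 hw).symm
  obtain ⟨hrw, hwαβ, hswαβ⟩ := kempeSwap_apply_of_ne_self hw'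
  have hvαβ : ¬ (φ v = α ∨ φ v = β) := fun h => hnr (hrw.trans (Adj.reachable ⟨hw.symm, hwαβ, h⟩))
  exact fun h => hvαβ (h ▸ hswαβ)

lemma kempeStep_of_reachable_of_injOn {x : ({v}ᶜ : Set V)} (hφ : IsLColoring G L φ)
    (hvα : φ v = α) (hr : (kempeGraph G φ α β).Reachable x v) (hβ : β ∈ L v)
    (hinj : Set.InjOn φ (G.neighborSet v))
    (hσ : IsLColoring (G.induce {v}ᶜ) (fun y => L y)
      (kempeSwap (G.induce {v}ᶜ) (fun y => φ y) α β x)) :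
    KempeStep G L φ (kempeSwap G φ α β x) ∧
      (fun u : ({v}ᶜ : Set V) => kempeSwap G φ α β x u) =
        kempeSwap (G.induce {v}ᶜ) (fun y => φ y) α β x := by
  have hcolor : ∀ w, G.Adj v w → φ w ≠ α := fun w hw h => hφ.2 hw (hvα.trans h.symm)
  have hleaf : ((kempeGraph G φ α β).neighborSet v).Subsingleton := fun w₁ hw₁ w₂ hw₂ =>
    hinj hw₁.1 hw₂.1 <| (hw₁.2.2.resolve_left (hcolor _ hw₁.1)).trans
      (hw₂.2.2.resolve_left (hcolor _ hw₂.1)).symm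
  have hres := kempeSwap_induce_compl_singleton x (.inr hleaf)
  have hv : kempeSwap G φ α β x v = β := kempeSwap_apply_left hr hvα
  refine ⟨⟨hφ, .of_induce_compl_singleton (hres ▸ hσ) (by rwa [hv]) fun w hw => ?_, α, β, x, rfl⟩,
    hres⟩
  rw [hv]
  by_cases hwβ : φ w = β
  · rw [kempeSwap_apply_right (hr.trans (Adj.reachable ⟨hw, .inl hvα, .inr hwβ⟩)) hwβ]
    exact fun h => hcolor w hw (hwβ.trans h.symm)
  · rwa [kempeSwap_apply_of_ne (hcolor w hw) hwβ]

/-- Pigeonhole: `L v ⊆ {α} ∪ φ(N(v))` while `|N(v)| < |L v|`. -/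
lemma mem_and_injOn_of_forall_exists_adj [Fintype V] (hv : gdeg G v < (L v).card)
    (hφ : IsLColoring G L φ) (hvα : φ v = α) {u₀ : V} (hu₀ : G.Adj v u₀) (hu₀β : φ u₀ = β)
    (hsat : ∀ γ ∈ L v, γ ≠ α → γ ≠ β → ∃ w, G.Adj v w ∧ φ w = γ) :
    β ∈ L v ∧ Set.InjOn φ (G.neighborSet v) := by
  have hmem : ∀ {w}, G.Adj v w → φ w ∈ (G.neighborFinset v).image φ := fun hw =>
    Finset.mem_image_of_mem φ ((mem_neighborFinset _ _ _).2 hw)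
  have hα : α ∉ (G.neighborFinset v).image φ := by
    simp only [Finset.mem_image, mem_neighborFinset, not_exists, not_and]
    exact fun w hw h => hφ.2 hw (hvα.trans h.symm)
  have hsub : L v ⊆ insert α ((G.neighborFinset v).image φ) := by
    intro γ hγ
    rcases eq_or_ne γ α with rfl | hγα
    · exact Finset.mem_insert_self _ _
    rcases eq_or_ne γ β with rfl | hγβ
    · exact Finset.mem_insert_of_mem (hu₀β ▸ hmem hu₀)
    obtain ⟨w, hw, rfl⟩ := hsat γ hγ hγα hγβ
    exact Finset.mem_insert_of_mem (hmem hw)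
  obtain ⟨hL, hinj⟩ := Finset.eq_insert_image_and_injOn_of_card_lt hα hsub
    (gdeg_eq_card_neighborFinset G v ▸ hv)
  refine ⟨hL ▸ Finset.mem_insert_of_mem (hu₀β ▸ hmem hu₀), ?_⟩
  simpa using hinj

lemma exists_lEquiv_of_reachable_of_forall_exists_adj [Fintype V] {x : ({v}ᶜ : Set V)}
    (hv : gdeg G v < (L v).card) (hφ : IsLColoring G L φ) (hvα : φ v = α)
    (hr : (kempeGraph G φ α β).Reachable x v)
    (hsat : ∀ γ ∈ L v, γ ≠ α → γ ≠ β → ∃ w, G.Adj v w ∧ φ w = γ)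
    (hσ : IsLColoring (G.induce {v}ᶜ) (fun y => L y)
      (kempeSwap (G.induce {v}ᶜ) (fun y => φ y) α β x)) :
    ∃ ψ, LEquiv G L φ ψ ∧
      (fun u : ({v}ᶜ : Set V) => ψ u) = kempeSwap (G.induce {v}ᶜ) (fun y => φ y) α β x := by
  obtain ⟨u₀, hu₀⟩ := mem_support_of_reachable (Ne.symm x.2) hr.symm
  have hu₀β : φ u₀ = β := hu₀.2.2.resolve_left fun h => hφ.2 hu₀.1 (hvα.trans h.symm)
  obtain ⟨hβ, hinj⟩ := mem_and_injOn_of_forall_exists_adj hv hφ hvα hu₀.1 hu₀β hsat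
  obtain ⟨hstep, hres⟩ := kempeStep_of_reachable_of_injOn hφ hvα hr hβ hinj hσ
  exact ⟨_, .single hstep, hres⟩

lemma exists_lEquiv_of_kempeStep_induce [Fintype V] (hv : gdeg G v < (L v).card)
    (hφ : IsLColoring G L φ) {σ : ({v}ᶜ : Set V) → ℕ}
    (hstep : KempeStep (G.induce {v}ᶜ) (fun y => L y) (fun y => φ y) σ) :
    ∃ ψ, LEquiv G L φ ψ ∧ (fun u : ({v}ᶜ : Set V) => ψ u) = σ := by
  obtain ⟨-, hσ, α, β, x, rfl⟩ := hstep
  by_cases hr : (kempeGraph G φ α β).Reachable x v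
  swap
  · obtain ⟨hstep, hres⟩ := kempeStep_of_not_reachable hφ hr hσ
    exact ⟨_, .single hstep, hres⟩
  by_cases hfree : ∃ γ ∈ L v, γ ≠ α ∧ γ ≠ β ∧ ∀ w, G.Adj v w → φ w ≠ γ
  · obtain ⟨γ, hγ, hγα, hγβ, hγN⟩ := hfree
    have hres : (fun y : ({v}ᶜ : Set V) => update φ v γ y) = fun y : ({v}ᶜ : Set V) => φ y :=
      funext fun y => update_of_ne y.2 _ _
    have hφ₁ : IsLColoring G L (update φ v γ) :=
      .of_induce_compl_singleton (hres ▸ hφ.induce _) (by simpa) fun w hw => by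
        simpa [update_of_ne hw.ne.symm] using hγN w hw
    have hr₁ : ¬ (kempeGraph G (update φ v γ) α β).Reachable x v := fun h => by
      have := eq_or_eq_of_mem_support_kempeGraph (mem_support_of_reachable (Ne.symm x.2) h.symm)
      simp_all
    obtain ⟨hstep, hres₁⟩ := kempeStep_of_not_reachable hφ₁ hr₁ (hres ▸ hσ)
    have hrecolor := kempeStep_of_eqOn_compl_singleton hφ hφ₁ fun u hu => (update_of_ne hu γ φ).symm
    exact ⟨_, .tail (.single hrecolor) hstep, hres ▸ hres₁⟩
  push Not at hfree
  rcases eq_or_eq_of_mem_support_kempeGraph (mem_support_of_reachable (Ne.symm x.2) hr.symm)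
    with hvα | hvβ
  · exact exists_lEquiv_of_reachable_of_forall_exists_adj hv hφ hvα hr hfree hσ
  · rw [kempeGraph_comm] at hr
    rw [kempeSwap_comm] at hσ ⊢
    exact exists_lEquiv_of_reachable_of_forall_exists_adj hv hφ hvβ hr
      (fun γ hγ hγβ hγα => hfree γ hγ hγα hγβ) hσ

lemma exists_lEquiv_of_lEquiv_induce [Fintype V] (hv : gdeg G v < (L v).card)
    (hφ : IsLColoring G L φ) {σ : ({v}ᶜ : Set V) → ℕ}
    (h : LEquiv (G.induce {v}ᶜ) (fun y => L y) (fun y => φ y) σ) :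
    ∃ ψ, LEquiv G L φ ψ ∧ (fun u : ({v}ᶜ : Set V) => ψ u) = σ := by
  induction h with
  | refl => exact ⟨φ, .refl, rfl⟩
  | tail _ hstep ih =>
    obtain ⟨ψ, hφψ, rfl⟩ := ih
    obtain ⟨χ, hψχ, hχ⟩ := exists_lEquiv_of_kempeStep_induce hv (hφψ.isLColoring hφ) hstep
    exact ⟨χ, hφψ.trans hψχ, hχ⟩

end Lifting

end

theorem stmt_4_general {V : Type*} [Fintype V] (G : SimpleGraph V)
    (L : V → Finset ℕ) (v : V)
    (hv : gdeg G v < (L v).card)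
    (hG' : LSwappable (G.induce ({v}ᶜ : Set V)) (fun x => L x.1)) :
    LSwappable G L := by
  obtain ⟨⟨φ₀, hφ₀⟩, hG'⟩ := hG'
  refine ⟨exists_isLColoring_of_induce_compl_singleton hv hφ₀, fun φ ψ hφ hψ => ?_⟩
  obtain ⟨χ, hφχ, hχψ⟩ :=
    exists_lEquiv_of_lEquiv_induce hv hφ (hG' _ _ (hφ.induce _) (hψ.induce _))
  exact hφχ.tail <| kempeStep_of_eqOn_compl_singleton (hφχ.isLColoring hφ) hψ
    fun u hu => congrFun hχψ ⟨u, hu⟩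

/-- **Lemma.** If `G` is connected, `|L(v)| > deg_G(v)` for a vertex `v`, and
`G − v` is swappable for the restriction of `L`, then `G` is `L`-swappable. -/
theorem stmt_4 {V : Type*} [Fintype V] (G : SimpleGraph V)
    (hconn : G.Connected) (L : V → Finset ℕ) (v : V)
    (hv : gdeg G v < (L v).card)
    (hG' : LSwappable (G.induce ({v}ᶜ : Set V)) (fun x => L x.1)) :
    LSwappable G L :=
  stmt_4_general G L v hv hG'
end

section
/- Fix a finite simple graph G, a degree-assignment L for G, and an edge vw of G such that the graph G − vw (G with the edge vw deleted) is connected and degree-choosable. If |L(v) ∩ L(w)| ≤ 1, then G is L-swappable. -/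
open SimpleGraph
open scoped Classical

/-!
Let `G' = G - vw` and let `c` be the only colour that `L v` and `L w` may share. Removing `c`
from `L v` gives lists on `G'` that are disjoint at `v` and `w` and exceed the degree at `w`.
For such lists all colourings of the connected graph `G'` are Kempe equivalent, and every swap
of `G'` is a swap of `G`: a Kempe chain of `G` using the edge `vw` would put the colour of one
endpoint into the list of the other. The same holds with the roles of `v` and `w` exchanged.
Degree-choosability of `G'` provides a colouring avoiding `c` at both `v` and `w`; every
`L`-colouring avoids `c` at `v` or at `w`, so all are equivalent to it.

For the equivalence on `G'` we induct on the number of edges: with `|L x| ≥ deg x` everywhere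
and a vertex `u` with `|L u| > deg u` in every component, delete the edges at `u`. The neighbours
of `u` then gain surplus, and a Kempe swap of the smaller graph lifts to `G` once `u` has been
recoloured to have at most one neighbour in the relevant Kempe graph, which the spare colour
of `u` allows.
-/

section

variable {V : Type*}

namespace SimpleGraph

variable {G : SimpleGraph V} {u y z : V}

lemma Reachable.exists_adj_of_ne (h : G.Reachable y z) (hne : y ≠ z) : ∃ b, G.Adj z b := by
  obtain ⟨p⟩ := h.symm
  cases p with
  | nil => exact absurd rfl hne
  | cons hadj _ => exact ⟨_, hadj⟩

lemma Reachable.of_forall_adj {H : SimpleGraph V}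
    (hcl : ∀ a b, G.Adj a b → H.Reachable y a → H.Reachable y b) (h : G.Reachable y z) :
    H.Reachable y z := by
  rw [reachable_iff_reflTransGen] at h
  induction h with
  | refl => rfl
  | tail _ hab ih => exact hcl _ _ hab ih

lemma eq_of_reachable_deleteIncidenceSet (h : (G.deleteIncidenceSet u).Reachable u z) : z = u := by
  by_contra hne
  obtain ⟨b, hb⟩ := h.symm.exists_adj_of_ne hne
  exact (deleteIncidenceSet_adj.1 hb).2.1 rfl

lemma Reachable.deleteIncidenceSet_or (h : G.Reachable y z) :
    (G.deleteIncidenceSet u).Reachable y z ∨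
      ∃ x, (x = u ∨ G.Adj x u) ∧ (G.deleteIncidenceSet u).Reachable y x := by
  rw [reachable_iff_reflTransGen] at h
  induction h with
  | refl => exact .inl .rfl
  | @tail p q _ hpq ih =>
    rcases ih with hp | hx
    · by_cases hpu : p = u
      · exact .inr ⟨p, .inl hpu, hp⟩
      by_cases hqu : q = u
      · exact .inr ⟨p, .inr (hqu ▸ hpq), hp⟩
      exact .inl (hp.trans (deleteIncidenceSet_adj.2 ⟨hpq, hpu, hqu⟩).reachable)
    · exact .inr hx

lemma reachable_deleteIncidenceSet_iff (hy : y ≠ u) (hz : z ≠ u)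
    (hu : ∀ b b', G.Adj u b → G.Adj u b' → b = b') :
    (G.deleteIncidenceSet u).Reachable y z ↔ G.Reachable y z := by
  refine ⟨fun h => h.mono (G.deleteIncidenceSet_le u), fun h => ?_⟩
  have hne : ∀ {a b}, (G.deleteIncidenceSet u).Reachable a b → a ≠ u → b ≠ u :=
    fun hab ha hb => ha (eq_of_reachable_deleteIncidenceSet (hb ▸ hab.symm))
  rcases h.deleteIncidenceSet_or (u := u) with h | ⟨x, hx, hyx⟩
  · exact h
  rcases h.symm.deleteIncidenceSet_or (u := u) with h' | ⟨x', hx', hzx'⟩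
  · exact h'.symm
  have hxu := hx.resolve_left (hne hyx hy)
  have hx'u := hx'.resolve_left (hne hzx' hz)
  obtain rfl := hu x x' hxu.symm hx'u.symm
  exact hyx.trans hzx'.symm

end SimpleGraph

lemma gdeg_mono [Finite V] {G H : SimpleGraph V} (hle : H ≤ G) (z : V) : gdeg H z ≤ gdeg G z :=
  Set.ncard_le_ncard (fun _ hb => hle hb)

lemma gdeg_lt_gdeg [Finite V] {G H : SimpleGraph V} (hle : H ≤ G) {z b : V} (hG : G.Adj z b)
    (hH : ¬H.Adj z b) : gdeg H z < gdeg G z :=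
  Set.ncard_lt_ncard ((Set.ssubset_iff_of_subset fun _ hb => hle hb).2 ⟨b, hG, hH⟩)

section Kempe

variable {G : SimpleGraph V} {L : V → Finset ℕ} {φ ψ : V → ℕ} {α β : ℕ}

@[simp] lemma kempeGraph_adj {a b : V} :
    (kempeGraph G φ α β).Adj a b ↔ G.Adj a b ∧ (φ a = α ∨ φ a = β) ∧ (φ b = α ∨ φ b = β) :=
  Iff.rfl

lemma kempeGraph_le : kempeGraph G φ α β ≤ G := fun _ _ h => h.1

lemma kempeGraph_mono {H : SimpleGraph V} (hle : H ≤ G) :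
    kempeGraph H φ α β ≤ kempeGraph G φ α β :=
  fun _ _ h => ⟨hle h.1, h.2⟩

lemma kempeSwap_apply (x z : V) :
    kempeSwap G φ α β x z =
      if (kempeGraph G φ α β).Reachable x z then Equiv.swap α β (φ z) else φ z := by
  by_cases h : (kempeGraph G φ α β).Reachable x z <;> simp [kempeSwap, h, Equiv.swap_apply_def]

lemma kempeSwap_of_not_reachable {x z : V} (h : ¬(kempeGraph G φ α β).Reachable x z) :
    kempeSwap G φ α β x z = φ z := by
  simp [kempeSwap_apply, h]

lemma kempeSwap_ne_of_adj (hφ : ∀ ⦃a b⦄, G.Adj a b → φ a ≠ φ b) (x : V) {a b : V}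
    (hab : G.Adj a b) : kempeSwap G φ α β x a ≠ kempeSwap G φ α β x b := by
  set K := (kempeGraph G φ α β).Reachable x
  -- an edge leaving the component has an endpoint outside `{α, β}`, which the swap fixes
  have leave : ∀ a b, G.Adj a b → K a → ¬K b → Equiv.swap α β (φ a) ≠ φ b := by
    intro a b hab ha hb
    have hout : ¬((φ a = α ∨ φ a = β) ∧ (φ b = α ∨ φ b = β)) :=
      fun h => hb (ha.trans (Adj.reachable ⟨hab, h⟩))
    by_cases hb' : φ b = α ∨ φ b = β
    · rw [Equiv.swap_apply_of_ne_of_ne (by tauto) (by tauto)]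
      exact hφ hab
    · rw [← Equiv.swap_apply_of_ne_of_ne (a := α) (b := β) (x := φ b) (by tauto) (by tauto)]
      exact (Equiv.swap α β).injective.ne (hφ hab)
  rw [kempeSwap_apply, kempeSwap_apply]
  split_ifs with ha hb hb
  · exact (Equiv.swap α β).injective.ne (hφ hab)
  · exact leave a b hab ha hb
  · exact (leave b a hab.symm hb ha).symm
  · exact hφ hab

lemma IsLColoring.mono {H : SimpleGraph V} (hφ : IsLColoring G L φ) (hle : H ≤ G) :
    IsLColoring H L φ :=
  ⟨hφ.1, fun _ _ h => hφ.2 (hle h)⟩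

lemma IsLColoring.kempeStep (hφ : IsLColoring G L φ) {x : V}
    (hL : ∀ z, kempeSwap G φ α β x z ∈ L z) : KempeStep G L φ (kempeSwap G φ α β x) :=
  ⟨hφ, ⟨hL, fun _ _ hab => kempeSwap_ne_of_adj hφ.2 x hab⟩, α, β, x, rfl⟩

lemma IsLColoring.update_of_deleteIncidenceSet {u : V} {c : ℕ}
    (hφ : IsLColoring (G.deleteIncidenceSet u) L φ) (hc : c ∈ L u)
    (hcN : ∀ z, G.Adj u z → φ z ≠ c) : IsLColoring G L (Function.update φ u c) := by
  refine ⟨fun z => ?_, fun a b hab => ?_⟩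
  · rcases eq_or_ne z u with rfl | hz
    · simpa using hc
    · simpa [hz] using hφ.1 z
  rcases eq_or_ne a u with rfl | ha
  · simpa [hab.ne'] using (hcN b hab).symm
  rcases eq_or_ne b u with rfl | hb
  · simpa [ha] using hcN a hab.symm
  simpa [ha, hb] using hφ.2 (deleteIncidenceSet_adj.2 ⟨hab, ha, hb⟩)

lemma kempeStep_update (hφ : IsLColoring G L φ) {u : V} {c : ℕ} (hc : c ∈ L u)
    (hcN : ∀ z, G.Adj u z → φ z ≠ c) : KempeStep G L φ (Function.update φ u c) := by
  -- the `φ u`,`c`-swap at `u`, whose component is `{u}`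
  have hK : ∀ z, (kempeGraph G φ (φ u) c).Reachable u z → z = u := by
    intro z h
    by_contra hne
    obtain ⟨b, hb, -, hbu | hbc⟩ := h.symm.exists_adj_of_ne hne
    · exact hφ.2 hb hbu.symm
    · exact hcN b hb hbc
  have hswap : kempeSwap G φ (φ u) c u = Function.update φ u c := by
    funext z
    rcases eq_or_ne z u with rfl | hz
    · simp [kempeSwap_apply]
    · rw [kempeSwap_of_not_reachable fun h => hz (hK z h), Function.update_of_ne hz]
  refine ⟨hφ, ?_, φ u, c, u, hswap.symm⟩
  exact (hφ.mono (G.deleteIncidenceSet_le u)).update_of_deleteIncidenceSet hc hcN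

lemma lEquiv_of_forall_ne_eq (hφ : IsLColoring G L φ) (hψ : IsLColoring G L ψ) (u : V)
    (h : ∀ z, z ≠ u → φ z = ψ z) : LEquiv G L φ ψ := by
  have hψφ : ψ = Function.update φ u (ψ u) := by
    funext z
    rcases eq_or_ne z u with rfl | hz
    · simp
    · simp [hz, h z hz]
  rw [hψφ]
  exact .single (kempeStep_update hφ (hψ.1 u) fun z hz hzu =>
    hψ.2 hz ((h z hz.ne').symm.trans hzu).symm)

lemma lSwappable_bot [Finite V] (hL : ∀ z, (L z).Nonempty) : LSwappable ⊥ L := by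
  refine ⟨⟨fun z => (hL z).choose, fun z => (hL z).choose_spec, fun _ _ h => h.elim⟩,
    fun φ ψ hφ hψ => ?_⟩
  have hD : ∀ D : Finset V, ∀ φ, IsLColoring ⊥ L φ → (∀ z, z ∉ D → φ z = ψ z) →
      LEquiv ⊥ L φ ψ := by
    intro D
    induction D using Finset.induction_on with
    | empty =>
      intro φ _ h
      obtain rfl : φ = ψ := funext fun z => h z (Finset.notMem_empty z)
      exact .refl
    | insert x D _ ih =>
      intro φ hφ h
      have hstep := kempeStep_update hφ (hψ.1 x) fun _ h => h.elim
      refine .head hstep (ih _ hstep.2.1 fun z hz => ?_)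
      rcases eq_or_ne z x with rfl | hzx
      · simp
      · rw [Function.update_of_ne hzx]
        exact h z (by simp [hzx, hz])
  have := Fintype.ofFinite V
  exact hD Finset.univ φ hφ (by simp)

end Kempe

lemma Finset.exists_free_color {ι : Type*} {N : Finset ι} {C : Finset ℕ} (f : ι → ℕ) (α β : ℕ)
    (h : N.card < C.card) :
    ∃ c ∈ C, c ∉ N.image f ∧ ((c = α ∨ c = β) →
      {z ∈ N | f z = α ∨ f z = β}.card ≤ 1 ∧
        ({z ∈ N | f z = α ∨ f z = β}.Nonempty → α ∈ C ∧ β ∈ C)) := by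
  set P := {z ∈ N | f z = α ∨ f z = β}
  set X := {z ∈ N | ¬(f z = α ∨ f z = β)}.image f
  have hXP : X.card + P.card ≤ N.card := by
    rw [← N.card_filter_add_card_filter_not (fun z => f z = α ∨ f z = β), add_comm]
    exact Nat.add_le_add_left Finset.card_image_le _
  by_cases hesc : ∃ c ∈ C, c ∉ X ∧ c ≠ α ∧ c ≠ β
  · obtain ⟨c, hc, hcX, hα, hβ⟩ := hesc
    refine ⟨c, hc, fun hcN => ?_, fun h => by tauto⟩
    obtain ⟨z, hz, rfl⟩ := Finset.mem_image.1 hcN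
    exact hcX (Finset.mem_image_of_mem f (Finset.mem_filter.2 ⟨hz, by tauto⟩))
  push Not at hesc
  -- otherwise `C ⊆ X ∪ {α, β}`, and counting forces `P` to be small
  have hPC : P.card < (C ∩ {α, β}).card := by
    have hsub : C ⊆ X ∪ (C ∩ {α, β}) := fun c hc => by
      by_cases hcX : c ∈ X
      · exact Finset.mem_union_left _ hcX
      · have := hesc c hc hcX
        simp only [Finset.mem_union, Finset.mem_inter, Finset.mem_insert, Finset.mem_singleton]
        tauto
    have := (Finset.card_le_card hsub).trans (Finset.card_union_le _ _)
    omega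
  have hle2 : (C ∩ {α, β}).card ≤ 2 :=
    (Finset.card_le_card Finset.inter_subset_right).trans Finset.card_le_two
  obtain ⟨c, hc, hcP⟩ := Finset.exists_mem_notMem_of_card_lt_card
    (Finset.card_image_le.trans_lt hPC)
  have hcαβ : c = α ∨ c = β := by simpa using (Finset.mem_inter.1 hc).2
  refine ⟨c, (Finset.mem_inter.1 hc).1, fun hcN => ?_, fun _ => ⟨?_, fun hP => ?_⟩⟩
  · obtain ⟨z, hz, rfl⟩ := Finset.mem_image.1 hcN
    exact hcP (Finset.mem_image_of_mem f (Finset.mem_filter.2 ⟨hz, hcαβ⟩))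
  · omega
  · have hall : C ∩ {α, β} = {α, β} := Finset.eq_of_subset_of_card_le Finset.inter_subset_right (by
      have := hP.card_pos
      have : (({α, β} : Finset ℕ)).card ≤ 2 := Finset.card_le_two
      omega)
    have hsub : {α, β} ⊆ C := hall ▸ Finset.inter_subset_left
    exact ⟨hsub (by simp), hsub (by simp)⟩

section Lift

variable {G : SimpleGraph V} {L : V → Finset ℕ} {φ s : V → ℕ} {α β : ℕ} {u : V}

lemma kempeGraph_deleteIncidenceSet (h : ∀ z, z ≠ u → φ z = s z) :
    kempeGraph (G.deleteIncidenceSet u) s α β = (kempeGraph G φ α β).deleteIncidenceSet u := by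
  ext a b
  simp only [kempeGraph_adj, deleteIncidenceSet_adj]
  constructor
  · rintro ⟨⟨hab, ha, hb⟩, hsa, hsb⟩
    rw [h a ha, h b hb]
    exact ⟨⟨hab, hsa, hsb⟩, ha, hb⟩
  · rintro ⟨⟨hab, hsa, hsb⟩, ha, hb⟩
    rw [h a ha] at hsa
    rw [h b hb] at hsb
    exact ⟨⟨hab, ha, hb⟩, hsa, hsb⟩

lemma kempeSwap_deleteIncidenceSet (h : ∀ z, z ≠ u → φ z = s z) {y z : V} (hy : y ≠ u)
    (hz : z ≠ u)
    (hu : ∀ b b', (kempeGraph G φ α β).Adj u b → (kempeGraph G φ α β).Adj u b' → b = b') :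
    kempeSwap (G.deleteIncidenceSet u) s α β y z = kempeSwap G φ α β y z := by
  rw [kempeSwap_apply, kempeSwap_apply, kempeGraph_deleteIncidenceSet h,
    reachable_deleteIncidenceSet_iff hy hz hu, h z hz]

lemma exists_update_kempeGraph_adj_subsingleton [Finite V] (hu : gdeg G u < (L u).card)
    (φ : V → ℕ) (α β : ℕ) :
    ∃ c ∈ L u, (∀ z, G.Adj u z → φ z ≠ c) ∧
      (∀ b b', (kempeGraph G (Function.update φ u c) α β).Adj u b →
        (kempeGraph G (Function.update φ u c) α β).Adj u b' → b = b') ∧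
      ((∃ b, (kempeGraph G (Function.update φ u c) α β).Adj u b) → α ∈ L u ∧ β ∈ L u) := by
  have := Fintype.ofFinite V
  have hN : (G.neighborFinset u).card < (L u).card := by
    rwa [gdeg, Set.ncard_eq_toFinset_card'] at hu
  obtain ⟨c, hcL, hcN, hpair⟩ := Finset.exists_free_color φ α β hN
  have hK : ∀ b, (kempeGraph G (Function.update φ u c) α β).Adj u b →
      (c = α ∨ c = β) ∧ b ∈ {z ∈ G.neighborFinset u | φ z = α ∨ φ z = β} := by
    rintro b ⟨hub, hc, hb⟩
    rw [Function.update_self] at hc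
    rw [Function.update_of_ne hub.ne'] at hb
    exact ⟨hc, by simpa [hub] using hb⟩
  refine ⟨c, hcL, fun z hz hzc => hcN (Finset.mem_image.2 ⟨z, by simpa using hz, hzc⟩),
    fun b b' hb hb' => ?_, fun ⟨b, hb⟩ => (hpair (hK b hb).1).2 ⟨b, (hK b hb).2⟩⟩
  exact Finset.card_le_one.1 (hpair (hK b hb).1).1 b (hK b hb).2 b' (hK b' hb').2

lemma exists_lEquiv_of_kempeStep_deleteIncidenceSet [Finite V] (hu : gdeg G u < (L u).card)
    (hφ : IsLColoring G L φ) {t : V → ℕ} (hst : KempeStep (G.deleteIncidenceSet u) L s t)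
    (hφs : ∀ z, z ≠ u → φ z = s z) :
    ∃ φ', LEquiv G L φ φ' ∧ IsLColoring G L φ' ∧ ∀ z, z ≠ u → φ' z = t z := by
  obtain ⟨-, ht, α, β, y, rfl⟩ := hst
  rcases eq_or_ne y u with rfl | hy
  · refine ⟨φ, .refl, hφ, fun z hz => ?_⟩
    rw [hφs z hz, kempeSwap_of_not_reachable fun h =>
      hz (eq_of_reachable_deleteIncidenceSet (h.mono kempeGraph_le))]
  -- recolour `u` first, so that it cannot join two components of the swap in `G - u`
  obtain ⟨c, hcL, hcN, hsub, hαβ⟩ := exists_update_kempeGraph_adj_subsingleton hu φ α β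
  have h₁ := kempeStep_update hφ hcL hcN
  set φ₁ := Function.update φ u c
  have hφ₁u : φ₁ u = c := Function.update_self _ _ _
  have hφ₁s : ∀ z, z ≠ u → φ₁ z = s z := fun z hz =>
    (Function.update_of_ne hz _ _).trans (hφs z hz)
  have htu : kempeSwap G φ₁ α β y u ∈ L u := by
    by_cases hR : (kempeGraph G φ₁ α β).Reachable y u
    · obtain ⟨hα, hβ⟩ := hαβ (hR.exists_adj_of_ne hy)
      rw [kempeSwap_apply, if_pos hR, Equiv.swap_apply_def, hφ₁u]
      split_ifs <;> assumption
    · rwa [kempeSwap_of_not_reachable hR, hφ₁u]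
  have hoff : ∀ z, z ≠ u →
      kempeSwap G φ₁ α β y z = kempeSwap (G.deleteIncidenceSet u) s α β y z :=
    fun z hz => (kempeSwap_deleteIncidenceSet hφ₁s hy hz hsub).symm
  have h₂ := h₁.2.1.kempeStep (α := α) (β := β) (x := y) fun z => by
    rcases eq_or_ne z u with rfl | hz
    · exact htu
    · rw [hoff z hz]
      exact ht.1 z
  exact ⟨_, (Relation.ReflTransGen.single h₁).tail h₂, h₂.2.1, hoff⟩

end Lift

section Surplus

variable [Finite V] {G : SimpleGraph V} {L : V → Finset ℕ} {u : V}

lemma LSwappable.of_deleteIncidenceSet (hu : gdeg G u < (L u).card)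
    (h : LSwappable (G.deleteIncidenceSet u) L) : LSwappable G L := by
  obtain ⟨⟨χ, hχ⟩, hequiv⟩ := h
  refine ⟨?_, fun φ ψ hφ hψ => ?_⟩
  · have := Fintype.ofFinite V
    have hN : ((G.neighborFinset u).image χ).card < (L u).card := by
      rw [gdeg, Set.ncard_eq_toFinset_card'] at hu
      exact Finset.card_image_le.trans_lt hu
    obtain ⟨c, hcL, hcN⟩ := Finset.exists_mem_notMem_of_card_lt_card hN
    exact ⟨_, hχ.update_of_deleteIncidenceSet hcL fun z hz hzc =>
      hcN (Finset.mem_image.2 ⟨z, by simpa using hz, hzc⟩)⟩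
  have hchain := hequiv φ ψ (hφ.mono (G.deleteIncidenceSet_le u))
    (hψ.mono (G.deleteIncidenceSet_le u))
  obtain ⟨φ', hφφ', hφ', hφ'ψ⟩ :
      ∃ φ', LEquiv G L φ φ' ∧ IsLColoring G L φ' ∧ ∀ z, z ≠ u → φ' z = ψ z := by
    clear hψ
    induction hchain with
    | refl => exact ⟨φ, .refl, hφ, fun _ _ => rfl⟩
    | tail _ hst ih =>
      obtain ⟨φ', h₁, hφ', hφ's⟩ := ih
      obtain ⟨φ'', h₂, hφ'', hφ''t⟩ :=
        exists_lEquiv_of_kempeStep_deleteIncidenceSet hu hφ' hst hφ's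
      exact ⟨φ'', h₁.trans h₂, hφ'', hφ''t⟩
  exact hφφ'.trans (lEquiv_of_forall_ne_eq hφ' hψ u hφ'ψ)

lemma exists_reachable_gdeg_lt_deleteIncidenceSet (hdeg : ∀ z, gdeg G z ≤ (L z).card)
    (hu : gdeg G u < (L u).card) (hsurp : ∀ z, ∃ x, G.Reachable z x ∧ gdeg G x < (L x).card)
    (z : V) :
    ∃ x, (G.deleteIncidenceSet u).Reachable z x ∧ gdeg (G.deleteIncidenceSet u) x < (L x).card := by
  obtain ⟨x, hzx, hx⟩ := hsurp z
  have hle := gdeg_mono (G.deleteIncidenceSet_le u)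
  rcases hzx.deleteIncidenceSet_or (u := u) with h | ⟨x', rfl | hx'u, h⟩
  · exact ⟨x, h, (hle x).trans_lt hx⟩
  · exact ⟨x', h, (hle x').trans_lt hu⟩
  · refine ⟨x', h, (gdeg_lt_gdeg (G.deleteIncidenceSet_le u) hx'u ?_).trans_le (hdeg x')⟩
    simp [deleteIncidenceSet_adj]

theorem lSwappable_of_forall_exists_reachable_gdeg_lt (G : SimpleGraph V) (L : V → Finset ℕ)
    (hdeg : ∀ z, gdeg G z ≤ (L z).card)
    (hsurp : ∀ z, ∃ x, G.Reachable z x ∧ gdeg G x < (L x).card) : LSwappable G L := by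
  induction G using WellFoundedLT.induction with
  | _ G ih =>
  by_cases h : ∃ u b, G.Adj u b ∧ gdeg G u < (L u).card
  · obtain ⟨u, b, hub, hu⟩ := h
    have hle := G.deleteIncidenceSet_le u
    have hlt : G.deleteIncidenceSet u < G := hle.lt_of_ne fun heq => by
      rw [← heq] at hub
      exact (deleteIncidenceSet_adj.1 hub).2.1 rfl
    exact .of_deleteIncidenceSet hu (ih _ hlt (fun z => (gdeg_mono hle z).trans (hdeg z))
      (exists_reachable_gdeg_lt_deleteIncidenceSet hdeg hu hsurp))
  -- otherwise an edge would lead to a vertex with surplus and a neighbour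
  obtain rfl : G = ⊥ := by
    ext a b
    refine ⟨fun hab => h ?_, fun h => h.elim⟩
    obtain ⟨x, hax, hx⟩ := hsurp a
    rcases eq_or_ne a x with rfl | hne
    · exact ⟨a, b, hab, hx⟩
    · obtain ⟨c, hc⟩ := hax.exists_adj_of_ne hne
      exact ⟨x, c, hc, hx⟩
  refine lSwappable_bot fun z => ?_
  obtain ⟨x, hzx, hx⟩ := hsurp z
  rw [reachable_bot] at hzx
  exact Finset.card_pos.1 (hzx ▸ (Nat.zero_le _).trans_lt hx)

end Surplus

lemma DegreeChoosable.exists_isLColoring_of_le {G : SimpleGraph V} (h : DegreeChoosable G)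
    {L : V → Finset ℕ} (hL : ∀ z, gdeg G z ≤ (L z).card) : ∃ φ, IsLColoring G L φ := by
  choose M hML hM using fun z => Finset.exists_subset_card_eq (hL z)
  obtain ⟨φ, hφ⟩ := h M hM
  exact ⟨φ, fun z => hML z (hφ.1 z), hφ.2⟩

section EdgeDeletion

variable {G : SimpleGraph V} {v w : V} {L M : V → Finset ℕ} {φ ψ : V → ℕ}

lemma gdeg_deleteEdges_lt [Finite V] (hvw : G.Adj v w) {z : V} (hz : z = v ∨ z = w) :
    gdeg (G.deleteEdges {s(v, w)}) z < gdeg G z := by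
  rcases hz with rfl | rfl
  · exact gdeg_lt_gdeg (G.deleteEdges_le _) hvw (by simp)
  · exact gdeg_lt_gdeg (G.deleteEdges_le _) hvw.symm (by simp)

lemma gdeg_deleteEdges_le_card_erase [Finite V] (hvw : G.Adj v w) {z : V} (hz : z = v ∨ z = w)
    (hL : gdeg G z ≤ (L z).card) (c : ℕ) :
    gdeg (G.deleteEdges {s(v, w)}) z ≤ ((L z).erase c).card := by
  have := gdeg_deleteEdges_lt hvw hz
  have := Finset.pred_card_le_card_erase (s := L z) (a := c)
  omega

lemma disjoint_erase_of_inter_subset {c : ℕ} (hc : L v ∩ L w ⊆ {c}) :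
    Disjoint ((L v).erase c) (L w) := by
  refine Finset.disjoint_left.2 fun x hxv hxw => ?_
  obtain ⟨hxc, hxv⟩ := Finset.mem_erase.1 hxv
  exact hxc (Finset.mem_singleton.1 (hc (Finset.mem_inter.2 ⟨hxv, hxw⟩)))

lemma IsLColoring.of_deleteEdges (hML : ∀ z, M z ⊆ L z) (hM : Disjoint (M v) (M w))
    (hφ : IsLColoring (G.deleteEdges {s(v, w)}) M φ) : IsLColoring G L φ := by
  refine ⟨fun z => hML z (hφ.1 z), fun a b hab => ?_⟩
  by_cases he : s(a, b) = s(v, w)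
  · rcases Sym2.eq_iff.1 he with ⟨rfl, rfl⟩ | ⟨rfl, rfl⟩
    · exact fun h => Finset.disjoint_left.1 hM (hφ.1 a) (h ▸ hφ.1 b)
    · exact fun h => Finset.disjoint_left.1 hM (h ▸ hφ.1 b) (hφ.1 a)
  · exact hφ.2 (deleteEdges_adj.2 ⟨hab, he⟩)

lemma kempeStep_of_deleteEdges (hML : ∀ z, M z ⊆ L z) (hM : Disjoint (M v) (M w))
    (h : KempeStep (G.deleteEdges {s(v, w)}) M φ ψ) : KempeStep G L φ ψ := by
  obtain ⟨hφ, hψ, α, β, y, rfl⟩ := h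
  refine ⟨hφ.of_deleteEdges hML hM, hψ.of_deleteEdges hML hM, α, β, y, ?_⟩
  set K := kempeGraph (G.deleteEdges {s(v, w)}) φ α β
  -- the swap would give an endpoint of `vw` the colour of the other one, common to both lists
  have hend : ∀ a b, Disjoint (M a) (M b) → (kempeGraph G φ α β).Adj a b → ¬K.Reachable y a := by
    rintro a b hab ⟨hadj, ha, hb⟩ hya
    have hswap : Equiv.swap α β (φ a) = φ b := by
      have := hφ.of_deleteEdges hML hM |>.2 hadj
      rcases ha with ha | ha <;> rcases hb with hb | hb <;> simp_all
    have := hψ.1 a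
    rw [kempeSwap_apply, if_pos hya, hswap] at this
    exact Finset.disjoint_left.1 hab this (hφ.1 b)
  funext z
  rw [kempeSwap_apply, kempeSwap_apply]
  congr 1
  refine propext ⟨fun h => h.mono (kempeGraph_mono (G.deleteEdges_le _)), fun h => ?_⟩
  refine h.of_forall_adj fun a b hab hya => ?_
  by_cases he : s(a, b) = s(v, w)
  · rcases Sym2.eq_iff.1 he with ⟨rfl, rfl⟩ | ⟨rfl, rfl⟩
    · exact absurd hya (hend a b hM hab)
    · exact absurd hya (hend a b hM.symm hab)
  · exact hya.trans (Adj.reachable ⟨deleteEdges_adj.2 ⟨hab.1, he⟩, hab.2⟩)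

lemma lEquiv_of_apply_ne [Finite V] (hvw : G.Adj v w)
    (hconn : (G.deleteEdges {s(v, w)}).Connected) (hL : ∀ z, gdeg G z ≤ (L z).card) {c : ℕ}
    (hc : L v ∩ L w ⊆ {c}) (hφ : IsLColoring G L φ) (hψ : IsLColoring G L ψ) (hφv : φ v ≠ c)
    (hψv : ψ v ≠ c) : LEquiv G L φ ψ := by
  set M := Function.update L v ((L v).erase c)
  have hMv : M v = (L v).erase c := Function.update_self _ _ _
  have hMz : ∀ z, z ≠ v → M z = L z := fun z hz => Function.update_of_ne hz _ _
  have hML : ∀ z, M z ⊆ L z := fun z => by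
    rcases eq_or_ne z v with rfl | hz
    · exact hMv ▸ Finset.erase_subset _ _
    · exact (hMz z hz).subset
  have hM : Disjoint (M v) (M w) := by
    rw [hMv, hMz w hvw.ne.symm]
    exact disjoint_erase_of_inter_subset hc
  have hcol : ∀ χ, IsLColoring G L χ → χ v ≠ c → IsLColoring (G.deleteEdges {s(v, w)}) M χ := by
    refine fun χ hχ hχv => ⟨fun z => ?_, (hχ.mono (G.deleteEdges_le _)).2⟩
    rcases eq_or_ne z v with rfl | hz
    · exact hMv ▸ Finset.mem_erase.2 ⟨hχv, hχ.1 z⟩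
    · exact hMz z hz ▸ hχ.1 z
  have hswap : LSwappable (G.deleteEdges {s(v, w)}) M := by
    refine lSwappable_of_forall_exists_reachable_gdeg_lt _ _ (fun z => ?_) fun z =>
      ⟨w, hconn.preconnected z w, ?_⟩
    · rcases eq_or_ne z v with rfl | hz
      · exact hMv ▸ gdeg_deleteEdges_le_card_erase hvw (.inl rfl) (hL z) c
      · exact hMz z hz ▸ (gdeg_mono (G.deleteEdges_le _) z).trans (hL z)
    · rw [hMz w hvw.ne.symm]
      exact (gdeg_deleteEdges_lt hvw (.inr rfl)).trans_le (hL w)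
  exact Relation.ReflTransGen.mono (fun _ _ => kempeStep_of_deleteEdges hML hM) _ _
    (hswap.2 φ ψ (hcol φ hφ hφv) (hcol ψ hψ hψv))

lemma exists_isLColoring_apply_ne [Finite V] (hvw : G.Adj v w)
    (hch : DegreeChoosable (G.deleteEdges {s(v, w)}))
    (hL : ∀ z, gdeg G z ≤ (L z).card) {c : ℕ} (hc : L v ∩ L w ⊆ {c}) :
    ∃ σ, IsLColoring G L σ ∧ σ v ≠ c ∧ σ w ≠ c := by
  set M : V → Finset ℕ := fun z => if z = v ∨ z = w then (L z).erase c else L z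
  have hMe : ∀ z, z = v ∨ z = w → M z = (L z).erase c := fun z hz => if_pos hz
  have hMo : ∀ z, ¬(z = v ∨ z = w) → M z = L z := fun z hz => if_neg hz
  have hML : ∀ z, M z ⊆ L z := fun z => by
    by_cases hz : z = v ∨ z = w
    · exact hMe z hz ▸ Finset.erase_subset _ _
    · exact (hMo z hz).subset
  obtain ⟨σ, hσ⟩ := hch.exists_isLColoring_of_le (L := M) fun z => by
    by_cases hz : z = v ∨ z = w
    · exact hMe z hz ▸ gdeg_deleteEdges_le_card_erase hvw hz (hL z) c
    · exact hMo z hz ▸ (gdeg_mono (G.deleteEdges_le _) z).trans (hL z)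
  have hσc : ∀ z, z = v ∨ z = w → σ z ≠ c := fun z hz =>
    (Finset.mem_erase.1 (hMe z hz ▸ hσ.1 z)).1
  have hM : Disjoint (M v) (M w) := by
    rw [hMe v (.inl rfl), hMe w (.inr rfl)]
    exact (disjoint_erase_of_inter_subset hc).mono_right (Finset.erase_subset _ _)
  exact ⟨σ, hσ.of_deleteEdges hML hM, hσc v (.inl rfl), hσc w (.inr rfl)⟩

end EdgeDeletion

end

theorem stmt_8_general {V : Type*} [Fintype V] (G : SimpleGraph V)
    (v w : V) (hvw : G.Adj v w)
    (hconn : (G.deleteEdges {s(v, w)}).Connected)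
    (hch : DegreeChoosable (G.deleteEdges {s(v, w)}))
    (L : V → Finset ℕ) (hL : ∀ u, (L u).card = gdeg G u)
    (hcap : (L v ∩ L w).card ≤ 1) :
    LSwappable G L := by
  obtain ⟨c, hc⟩ := Finset.card_le_one_iff_subset_singleton.1 hcap
  have hL' : ∀ z, gdeg G z ≤ (L z).card := fun z => (hL z).ge
  obtain ⟨σ, hσ, hσv, hσw⟩ := exists_isLColoring_apply_ne hvw hch hL' hc
  have hconn' : (G.deleteEdges {s(w, v)}).Connected := by rwa [Sym2.eq_swap]
  have hc' : L w ∩ L v ⊆ {c} := by rwa [Finset.inter_comm]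
  have hσφ : ∀ φ, IsLColoring G L φ → LEquiv G L φ σ ∧ LEquiv G L σ φ := by
    intro φ hφ
    by_cases hφv : φ v = c
    · have hφw : φ w ≠ c := fun h => hφ.2 hvw (hφv.trans h.symm)
      exact ⟨lEquiv_of_apply_ne hvw.symm hconn' hL' hc' hφ hσ hφw hσw,
        lEquiv_of_apply_ne hvw.symm hconn' hL' hc' hσ hφ hσw hφw⟩
    · exact ⟨lEquiv_of_apply_ne hvw hconn hL' hc hφ hσ hφv hσv,
        lEquiv_of_apply_ne hvw hconn hL' hc hσ hφ hσv hφv⟩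
  exact ⟨⟨σ, hσ⟩, fun φ ψ hφ hψ => (hσφ φ hφ).1.trans (hσφ ψ hψ).2⟩

/-- **Lemma.** Fix a degree-assignment `L` for `G` and an edge `vw` such that `G − vw`
is connected and degree-choosable.  If `|L(v) ∩ L(w)| ≤ 1`, then `G` is
`L`-swappable. -/
theorem stmt_8 {V : Type*} [Fintype V] [DecidableEq V] (G : SimpleGraph V)
    (v w : V) (hvw : G.Adj v w)
    (hconn : (G.deleteEdges {s(v, w)}).Connected)
    (hch : DegreeChoosable (G.deleteEdges {s(v, w)}))
    (L : V → Finset ℕ) (hL : ∀ u, (L u).card = gdeg G u)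
    (hcap : (L v ∩ L w).card ≤ 1) :
    LSwappable G L :=
  stmt_8_general G v w hvw hconn hch L hL hcap
end
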